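/- arXiv:2011.06112 — 2 statements merged into one kernel-verified Lean document; each statement's English description precedes it below -/
import Mathlib

section
/- For every graph G = (V,E), every h ≥ 1, and every W ⊆ V, there exists a forest F ⊆ G such that two vertices u, v ∈ W are connected in the h-hop connectivity graph of W with respect to G if and only if they are connected in the 2h-hop connectivity graph of W with respect to F. -/
/-- The `h`-hop connectivity graph of `W` with respect to a graph `H`: vertices are the
elements of `W`, with an edge between `a` and `b` whenever there is a simple path in `H`
of at most `h` edges between them whose only vertices in `W` are its two endpoints. -/
def connGraph {V : Type*} (H : SimpleGraph V) (W : Set V) (h : ℕ) : SimpleGraph W :=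
  SimpleGraph.fromRel (fun a b =>
    ∃ p : H.Walk (a : V) (b : V), p.IsPath ∧ p.length ≤ h ∧
      ∀ x ∈ p.support, x ∈ W → x = (a : V) ∨ x = (b : V))

namespace ForestRed

open SimpleGraph

variable {V : Type*} (G : SimpleGraph V) (W : Set V) (h : ℕ)

/-- Reachability in `connGraph G W h`, as a relation on `V`. -/
def Reach' (a b : V) : Prop :=
  ∃ (ha : a ∈ W) (hb : b ∈ W), (connGraph G W h).Reachable ⟨a, ha⟩ ⟨b, hb⟩

/-- `w` is a "half-distance root" witness for `x`. -/
def Wit (w x : V) : Prop :=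
  w ∈ W ∧ ∃ p : G.Walk w x, p.length ≤ h / 2 ∧ ∀ z ∈ p.support, z ∈ W → z = w ∨ z = x

lemma reach_of_walk (K : SimpleGraph V) (k : ℕ) {a b : V} (ha : a ∈ W) (hb : b ∈ W)
    (p : K.Walk a b) (hlen : p.length ≤ k)
    (hsupp : ∀ z ∈ p.support, z ∈ W → z = a ∨ z = b) :
    (connGraph K W k).Reachable ⟨a, ha⟩ ⟨b, hb⟩ := by
  classical
  by_cases hab : a = b
  · subst hab; exact Reachable.refl _
  · apply SimpleGraph.Adj.reachable
    show (SimpleGraph.fromRel _).Adj _ _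
    rw [SimpleGraph.fromRel_adj]
    refine ⟨fun hc => hab (congrArg Subtype.val hc), Or.inl ?_⟩
    exact ⟨p.bypass, p.bypass_isPath, le_trans p.length_bypass_le hlen,
      fun z hz => hsupp z (p.support_bypass_subset hz)⟩

lemma wit_self {x : V} (hx : x ∈ W) : Wit G W h x x :=
  ⟨hx, SimpleGraph.Walk.nil, by simp, by simp⟩

lemma reach'_refl {x : V} (hx : x ∈ W) : Reach' G W h x x := ⟨hx, hx, Reachable.refl _⟩

lemma reach'_symm {a b : V} : Reach' G W h a b → Reach' G W h b a :=
  fun ⟨ha, hb, r⟩ => ⟨hb, ha, r.symm⟩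

lemma reach'_trans {a b c : V} : Reach' G W h a b → Reach' G W h b c → Reach' G W h a c :=
  fun ⟨ha, hb, r⟩ ⟨_, hc, r'⟩ => ⟨ha, hc, r.trans r'⟩

lemma reach'_of_wit {w x : V} (hw : Wit G W h w x) (hx : x ∈ W) : Reach' G W h w x := by
  obtain ⟨hwW, p, hlen, hsupp⟩ := hw
  exact ⟨hwW, hx, reach_of_walk W G h hwW hx p (le_trans hlen (Nat.div_le_self _ _)) hsupp⟩

/-- The joining lemma: two roots of the same vertex are connected. -/
lemma wit_join {w w' x : V} (hw : Wit G W h w x) (hw' : Wit G W h w' x) :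
    Reach' G W h w w' := by
  obtain ⟨hwW, p, hlen, hsupp⟩ := hw
  obtain ⟨hw'W, p', hlen', hsupp'⟩ := hw'
  by_cases hxW : x ∈ W
  · exact reach'_trans G W h (reach'_of_wit G W h ⟨hwW, p, hlen, hsupp⟩ hxW)
      (reach'_symm G W h (reach'_of_wit G W h ⟨hw'W, p', hlen', hsupp'⟩ hxW))
  · refine ⟨hwW, hw'W, reach_of_walk W G h hwW hw'W (p.append p'.reverse) ?_ ?_⟩
    · rw [SimpleGraph.Walk.length_append, SimpleGraph.Walk.length_reverse]
      omega
    · intro z hz hzW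
      rw [SimpleGraph.Walk.mem_support_append_iff] at hz
      rcases hz with hz | hz
      · rcases hsupp z hz hzW with h1 | h1
        · exact Or.inl h1
        · exact absurd (h1 ▸ hzW) hxW
      · rw [SimpleGraph.Walk.support_reverse, List.mem_reverse] at hz
        rcases hsupp' z hz hzW with h1 | h1
        · exact Or.inr h1
        · exact absurd (h1 ▸ hzW) hxW

def ellP (x : V) (n : ℕ) : Prop :=
  ∃ w, w ∈ W ∧ ∃ p : G.Walk w x, p.length = n ∧ ∀ z ∈ p.support, z ∈ W → z = w ∨ z = x

noncomputable def ell (x : V) : ℕ := sInf {n | ellP G W x n}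

lemma ell_le_of_wit {w x : V} (hw : Wit G W h w x) : ell G W x ≤ h / 2 := by
  obtain ⟨hwW, p, hlen, hsupp⟩ := hw
  exact le_trans (Nat.sInf_le ⟨w, hwW, p, rfl, hsupp⟩) hlen

lemma ell_eq_zero_of_mem {x : V} (hx : x ∈ W) : ell G W x = 0 :=
  Nat.le_zero.mp (Nat.sInf_le ⟨x, hx, SimpleGraph.Walk.nil, by simp, by simp⟩)

lemma ell_spec {x : V} (hx : ∃ w, Wit G W h w x) : ellP G W x (ell G W x) := by
  obtain ⟨w, hwW, p, hlen, hsupp⟩ := hx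
  exact Nat.sInf_mem (⟨p.length, w, hwW, p, rfl, hsupp⟩ : {n | ellP G W x n}.Nonempty)

lemma ell_pos {x : V} (hx : ∃ w, Wit G W h w x) (hxW : x ∉ W) : 1 ≤ ell G W x := by
  rcases Nat.eq_zero_or_pos (ell G W x) with h0 | h1
  · obtain ⟨w, hwW, p, hlen, _⟩ := ell_spec G W h hx
    rw [h0] at hlen
    exact absurd ((SimpleGraph.Walk.eq_of_length_eq_zero hlen) ▸ hwW) hxW
  · exact h1

/-- The parent-step lemma. -/
lemma parent_step {x : V} (hx : ∃ w, Wit G W h w x) (hxW : x ∉ W) :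
    ∃ y, G.Adj x y ∧ (∃ w, Wit G W h w x ∧ Wit G W h w y) ∧ ell G W y < ell G W x := by
  classical
  obtain ⟨w, hwW, p, hlen, hsupp⟩ := ell_spec G W h hx
  set q := p.bypass with hq
  have hqpath : q.IsPath := p.bypass_isPath
  have hqlen : q.length ≤ ell G W x := hlen ▸ p.length_bypass_le
  have hqsupp : ∀ z ∈ q.support, z ∈ W → z = w ∨ z = x :=
    fun z hz => hsupp z (p.support_bypass_subset hz)
  have hellx : ell G W x ≤ h / 2 := ell_le_of_wit G W h hx.choose_spec
  have hne : x ≠ w := fun hc => hxW (hc ▸ hwW)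
  obtain ⟨y, hadj, q', hdec⟩ := SimpleGraph.Walk.exists_eq_cons_of_ne hne q.reverse
  have hrevpath : q.reverse.IsPath := hqpath.reverse
  have hrevsupp : q.reverse.support = x :: q'.support := by
    rw [hdec, SimpleGraph.Walk.support_cons]
  have hxnot : x ∉ q'.support := by
    have := hrevpath.support_nodup
    rw [hrevsupp] at this
    exact (List.nodup_cons.mp this).1
  have hq'supp : ∀ z ∈ q'.support, z ∈ W → z = w ∨ z = y := by
    intro z hz hzW
    have hz' : z ∈ q.support := by
      rw [← List.mem_reverse, ← SimpleGraph.Walk.support_reverse, hrevsupp]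
      exact List.mem_cons_of_mem _ hz
    rcases hqsupp z hz' hzW with h1 | h1
    · exact Or.inl h1
    · exact absurd (h1 ▸ hz) hxnot
  have hq'len : q'.length + 1 = q.length := by
    have : q.reverse.length = q'.length + 1 := by rw [hdec, SimpleGraph.Walk.length_cons]
    rw [SimpleGraph.Walk.length_reverse] at this
    omega
  have hq1 : 1 ≤ q.length := by
    rcases Nat.eq_zero_or_pos q.length with h0 | h1
    · exact absurd (SimpleGraph.Walk.eq_of_length_eq_zero h0).symm hne
    · exact h1
  have helly : ell G W y ≤ q'.length := by
    refine Nat.sInf_le ⟨w, hwW, q'.reverse, ?_, ?_⟩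
    · rw [SimpleGraph.Walk.length_reverse]
    · intro z hz
      rw [SimpleGraph.Walk.support_reverse, List.mem_reverse] at hz
      exact hq'supp z hz
  refine ⟨y, hadj, ⟨w, ⟨hwW, q, hqlen.trans hellx, hqsupp⟩, ⟨hwW, q'.reverse, ?_, ?_⟩⟩, ?_⟩
  · rw [SimpleGraph.Walk.length_reverse]; omega
  · intro z hz
    rw [SimpleGraph.Walk.support_reverse, List.mem_reverse] at hz
    exact hq'supp z hz
  · omega

lemma wit_of_mem_path {u v z : V} (P : G.Walk u v) (hP : P.IsPath) (hlen : P.length ≤ h)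
    (hsupp : ∀ z' ∈ P.support, z' ∈ W → z' = u ∨ z' = v)
    (hz : z ∈ P.support) (hu : u ∈ W) (hv : v ∈ W) :
    Wit G W h u z ∨ Wit G W h v z := by
  classical
  set p1 := P.takeUntil z hz with hp1
  set p2 := P.dropUntil z hz with hp2
  have hspec : p1.append p2 = P := P.take_spec hz
  have hlen12 : p1.length + p2.length = P.length := by
    rw [← hspec, SimpleGraph.Walk.length_append]
  have hnodup : (p1.support ++ p2.support.tail).Nodup := by
    rw [← SimpleGraph.Walk.support_append, hspec]
    exact hP.support_nodup
  have hdisj := List.disjoint_of_nodup_append hnodup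
  by_cases hcase : p1.length ≤ h / 2
  · left
    refine ⟨hu, p1, hcase, ?_⟩
    intro z' hz' hz'W
    rcases hsupp z' (P.support_takeUntil_subset hz hz') hz'W with h1 | h1
    · exact Or.inl h1
    · subst h1
      by_cases hzv : z = z'
      · exact Or.inr hzv.symm
      · exfalso
        have hv2 : z' ∈ p2.support.tail := by
          have : z' ∈ p2.support := p2.end_mem_support
          rw [p2.support_eq_cons] at this
          rcases List.mem_cons.mp this with h2 | h2
          · exact absurd h2.symm hzv
          · exact h2
        exact hdisj hz' hv2
  · right
    have hcase2 : p2.length ≤ h / 2 := by omega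
    refine ⟨hv, p2.reverse, by rw [SimpleGraph.Walk.length_reverse]; exact hcase2, ?_⟩
    intro z' hz' hz'W
    rw [SimpleGraph.Walk.support_reverse, List.mem_reverse] at hz'
    rcases hsupp z' (P.support_dropUntil_subset hz hz') hz'W with h1 | h1
    · subst h1
      rcases List.mem_cons.mp (p2.support_eq_cons ▸ hz') with h2 | h2
      · exact Or.inr h2
      · exact absurd h2 (hdisj p1.start_mem_support)
    · exact Or.inl h1

lemma exists_last_edge {K : SimpleGraph V} {y u : V} (q : K.Walk y u) (hne : y ≠ u) :
    ∃ z, s(z, u) ∈ q.edges := by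
  induction q with
  | nil => exact absurd rfl hne
  | @cons a b c hadj q ih =>
    by_cases hbc : b = c
    · subst hbc
      exact ⟨a, by simp⟩
    · obtain ⟨z, hz⟩ := ih hbc
      exact ⟨z, List.mem_cons_of_mem _ hz⟩

lemma acyclic_of_parent (K : SimpleGraph V) (f : V → V) (m : V → ℕ)
    (hK : ∀ {x y}, K.Adj x y → (y = f x ∧ m y < m x) ∨ (x = f y ∧ m x < m y)) :
    K.IsAcyclic := by
  classical
  intro v c hc
  obtain ⟨u, humem⟩ : ∃ u, u ∈ c.support.argmax m := by
    cases ha : c.support.argmax m with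
    | none => exact absurd (List.argmax_eq_none.mp ha) c.support_ne_nil
    | some u => exact ⟨u, by simp [ha, Option.mem_def]⟩
  have hu : u ∈ c.support := List.argmax_mem humem
  have hmax : ∀ z ∈ c.support, m z ≤ m u := fun z hz => List.le_of_mem_argmax hz humem
  have hc' := hc.rotate hu
  have hsup : ∀ z ∈ (c.rotate u hu).support, m z ≤ m u := by
    intro z hz
    rw [(c.rotate u hu).support_eq_cons] at hz
    rcases List.mem_cons.mp hz with rfl | hz
    · exact le_refl _
    · apply hmax
      have hperm := c.support_rotate u hu
      rw [c.support_eq_cons]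
      exact List.mem_cons_of_mem _ (hperm.mem_iff.mp hz)
  obtain ⟨y, hadj, q, hdec⟩ := SimpleGraph.Walk.not_nil_iff.mp hc'.not_nil
  have hymem : y ∈ (c.rotate u hu).support := by
    rw [hdec, SimpleGraph.Walk.support_cons]
    exact List.mem_cons_of_mem _ q.start_mem_support
  have hyfu : y = f u := by
    rcases hK hadj with ⟨h1, _⟩ | ⟨_, h2⟩
    · exact h1
    · exact absurd (hsup y hymem) (by omega)
  obtain ⟨z, hz⟩ := exists_last_edge q hadj.ne.symm
  have hzmem : z ∈ (c.rotate u hu).support := by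
    rw [hdec, SimpleGraph.Walk.support_cons]
    exact List.mem_cons_of_mem _ (q.fst_mem_support_of_mem_edges hz)
  have hzfu : z = f u := by
    rcases hK (q.adj_of_mem_edges hz) with ⟨h1, h2⟩ | ⟨h2, _⟩
    · exact absurd (hsup z hzmem) (by omega)
    · exact h2
  have hnodup : ((c.rotate u hu).edges).Nodup := hc'.isCircuit.isTrail.edges_nodup
  rw [hdec, SimpleGraph.Walk.edges_cons] at hnodup
  have : s(u, y) ∈ q.edges := by
    rw [show s(u,y) = s(z,u) by rw [hzfu, ← hyfu, Sym2.eq_swap]]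
    exact hz
  exact (List.nodup_cons.mp hnodup).1 this

lemma chain_edges_member {cs : Set (SimpleGraph V)} (hchain : IsChain (· ≤ ·) cs)
    {K0 : SimpleGraph V} (hK0 : K0 ∈ cs) (l : List (Sym2 V))
    (hl : ∀ e ∈ l, ∃ K ∈ cs, e ∈ K.edgeSet) :
    ∃ K ∈ cs, ∀ e ∈ l, e ∈ K.edgeSet := by
  induction l with
  | nil => exact ⟨K0, hK0, by simp⟩
  | cons e l ih =>
    obtain ⟨K1, hK1, hK1e⟩ := hl e (List.mem_cons_self)
    obtain ⟨K2, hK2, hK2l⟩ := ih (fun e' he' => hl e' (List.mem_cons_of_mem _ he'))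
    rcases hchain.total hK1 hK2 with hle | hle
    · exact ⟨K2, hK2, fun e' he' => by
        rcases List.mem_cons.mp he' with rfl | he'
        · exact edgeSet_mono hle hK1e
        · exact hK2l e' he'⟩
    · exact ⟨K1, hK1, fun e' he' => by
        rcases List.mem_cons.mp he' with rfl | he'
        · exact hK1e
        · exact edgeSet_mono hle (hK2l e' he')⟩

lemma isAcyclic_sSup_chain {cs : Set (SimpleGraph V)} (hchain : IsChain (· ≤ ·) cs)
    {K0 : SimpleGraph V} (hK0 : K0 ∈ cs) (hac : ∀ K ∈ cs, K.IsAcyclic) :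
    (sSup cs).IsAcyclic := by
  intro v c hc
  have hl : ∀ e ∈ c.edges, ∃ K ∈ cs, e ∈ K.edgeSet := by
    intro e he
    have := c.edges_subset_edgeSet he
    induction e with
    | h x y =>
      rw [(sSup cs).mem_edgeSet, sSup_adj] at this
      obtain ⟨K, hK, hKadj⟩ := this
      exact ⟨K, hK, K.mem_edgeSet.mpr hKadj⟩
  obtain ⟨K, hK, hKe⟩ := chain_edges_member hchain hK0 c.edges hl
  exact hac K hK (c.transfer K hKe) (hc.transfer hKe)

lemma reachable_of_not_acyclic_sup {F : SimpleGraph V} (hF : F.IsAcyclic) {x y : V}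
    (hxy : x ≠ y)
    (hnot : ¬ (F ⊔ fromEdgeSet {s(x, y)}).IsAcyclic) : F.Reachable x y := by
  classical
  rw [IsAcyclic] at hnot
  push_neg at hnot
  obtain ⟨v, c, hc⟩ := hnot
  by_cases hmem : s(x, y) ∈ c.edges
  · have hadjr : (F ⊔ fromEdgeSet {s(x, y)}).Adj x y ∧
        ((F ⊔ fromEdgeSet {s(x, y)}) \ fromEdgeSet {s(x, y)}).Reachable x y := by
      rw [← deleteEdges, adj_and_reachable_delete_edges_iff_exists_cycle]
      exact ⟨v, c, hc, hmem⟩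
    refine hadjr.2.mono ?_
    intro a b hab
    rw [sdiff_adj, sup_adj] at hab
    rcases hab with ⟨hab1 | hab1, hab2⟩
    · exact hab1
    · exact absurd hab1 hab2
  · have hsub : ∀ e ∈ c.edges, e ∈ F.edgeSet := by
      intro e he
      have hE := c.edges_subset_edgeSet he
      rw [edgeSet_sup, Set.mem_union, edgeSet_fromEdgeSet] at hE
      rcases hE with hE | hE
      · exact hE
      · exact absurd (hE.1 ▸ he : e ∈ c.edges) (by
          rcases hE with ⟨hE1, _⟩
          rw [Set.mem_singleton_iff] at hE1
          subst hE1
          exact hmem)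
    exact absurd (hc.transfer hsub) (hF (c.transfer F hsub))

def ClReach (x y : V) : Prop :=
  ∃ w w', Wit G W h w x ∧ Wit G W h w' y ∧ Reach' G W h w w'

lemma clreach_symm {x y : V} : ClReach G W h x y → ClReach G W h y x :=
  fun ⟨w, w', h1, h2, h3⟩ => ⟨w', w, h2, h1, reach'_symm G W h h3⟩

lemma clreach_trans {x y z : V} : ClReach G W h x y → ClReach G W h y z → ClReach G W h x z :=
  fun ⟨w1, w2, h1, h2, h3⟩ ⟨w2', w3, h4, h5, h6⟩ =>
    ⟨w1, w3, h1, h5, reach'_trans G W h h3 (reach'_trans G W h (wit_join G W h h2 h4) h6)⟩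

def Gcand : SimpleGraph V where
  Adj x y := G.Adj x y ∧ ClReach G W h x y
  symm := ⟨fun x y ⟨ha, hc⟩ => ⟨ha.symm, clreach_symm G W h hc⟩⟩
  loopless := ⟨fun x ⟨ha, _⟩ => G.irrefl ha⟩

end ForestRed

open ForestRed SimpleGraph

/-- Every graph `G` contains a forest `F` such that two vertices of `W` are connected in
the `h`-hop connectivity graph of `W` with respect to `G` iff they are connected in the
`2h`-hop connectivity graph of `W` with respect to `F`. -/
theorem forest_reduction {V : Type*} (G : SimpleGraph V) (h : ℕ) (hh : 1 ≤ h)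
    (W : Set V) :
    ∃ F : SimpleGraph V, F ≤ G ∧ F.IsAcyclic ∧
      ∀ (u v : V) (hu : u ∈ W) (hv : v ∈ W),
        ((connGraph G W h).Reachable ⟨u, hu⟩ ⟨v, hv⟩ ↔
          (connGraph F W (2 * h)).Reachable ⟨u, hu⟩ ⟨v, hv⟩) := by
  classical
  have hps : ∀ x : V, (∃ w, Wit G W h w x) → x ∉ W →
      ∃ y, G.Adj x y ∧ (∃ w, Wit G W h w x ∧ Wit G W h w y) ∧ ell G W y < ell G W x :=
    fun x hx hxW => parent_step G W h hx hxW
  choose! pa hpa1 hpa2 hpa3 using hps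
  set Fpar : SimpleGraph V :=
    SimpleGraph.fromEdgeSet {e | ∃ x, (∃ w, Wit G W h w x) ∧ x ∉ W ∧ e = s(x, pa x)}
    with hFpardef
  have key : ∀ x, (∃ w, Wit G W h w x) → x ∉ W → (Gcand G W h).Adj x (pa x) := by
    intro x hd hW
    obtain ⟨w, h1, h2⟩ := hpa2 x hd hW
    exact ⟨hpa1 x hd hW, ⟨w, w, h1, h2, reach'_refl G W h h1.1⟩⟩
  have hFparGc : Fpar ≤ Gcand G W h := by
    intro a b hab
    rw [hFpardef, SimpleGraph.fromEdgeSet_adj] at hab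
    obtain ⟨hmem, hne⟩ := hab
    simp only [Set.mem_setOf_eq] at hmem
    obtain ⟨x, hxdom, hxW, he⟩ := hmem
    rcases Sym2.eq_iff.mp he with ⟨ha, hb⟩ | ⟨ha, hb⟩
    · rw [ha, hb]; exact key x hxdom hxW
    · rw [ha, hb]; exact (key x hxdom hxW).symm
  have hFparAc : Fpar.IsAcyclic := by
    refine acyclic_of_parent Fpar pa (ell G W) ?_
    intro x y hxy
    rw [hFpardef, SimpleGraph.fromEdgeSet_adj] at hxy
    obtain ⟨hmem, hne⟩ := hxy
    simp only [Set.mem_setOf_eq] at hmem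
    obtain ⟨z, hzdom, hzW, he⟩ := hmem
    rcases Sym2.eq_iff.mp he with ⟨ha, hb⟩ | ⟨ha, hb⟩
    · exact Or.inl ⟨by rw [ha, hb], by rw [ha, hb]; exact hpa3 _ hzdom hzW⟩
    · exact Or.inr ⟨by rw [ha, hb], by rw [ha, hb]; exact hpa3 _ hzdom hzW⟩
  -- Zorn's lemma
  obtain ⟨F, hFparF, hFmax⟩ :=
    zorn_le_nonempty₀ {F' : SimpleGraph V | Fpar ≤ F' ∧ F' ≤ Gcand G W h ∧ F'.IsAcyclic}
      (by
        intro c hcS hchain y hy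
        refine ⟨sSup c, ⟨le_trans (hcS hy).1 (le_sSup hy),
          sSup_le (fun K hK => (hcS hK).2.1),
          isAcyclic_sSup_chain hchain hy (fun K hK => (hcS hK).2.2)⟩,
          fun z hz => le_sSup hz⟩)
      Fpar ⟨le_refl _, hFparGc, hFparAc⟩
  have hFGc : F ≤ Gcand G W h := hFmax.1.2.1
  have hFAc : F.IsAcyclic := hFmax.1.2.2
  -- maximality: any candidate edge not in F has its endpoints already F-connected
  have hforce : ∀ x y, (Gcand G W h).Adj x y → ¬ F.Adj x y → F.Reachable x y := by
    intro x y hadj hnadj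
    by_cases hac : (F ⊔ SimpleGraph.fromEdgeSet {s(x,y)}).IsAcyclic
    · exfalso
      have hFS' : F ⊔ SimpleGraph.fromEdgeSet {s(x,y)} ∈
          {F' : SimpleGraph V | Fpar ≤ F' ∧ F' ≤ Gcand G W h ∧ F'.IsAcyclic} := by
        refine ⟨le_trans (le_trans hFparF le_sup_left) (le_refl _), ?_, hac⟩
        refine sup_le hFGc ?_
        intro a b hab
        rw [SimpleGraph.fromEdgeSet_adj, Set.mem_singleton_iff] at hab
        rcases Sym2.eq_iff.mp hab.1 with ⟨ha, hb⟩ | ⟨ha, hb⟩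
        · rw [ha, hb]; exact hadj
        · rw [ha, hb]; exact hadj.symm
      have hle := hFmax.2 hFS' le_sup_left
      refine hnadj (hle ?_)
      exact (SimpleGraph.sup_adj _ _ _ _).mpr (Or.inr ((SimpleGraph.fromEdgeSet_adj _).mpr ⟨rfl, hadj.ne⟩))
    · exact reachable_of_not_acyclic_sup hFAc hadj.ne hac
  -- rooted chains inside F
  have RC : ∀ n x, ell G W x ≤ n → (∃ w, Wit G W h w x) →
      ∃ r, r ∈ W ∧ ∃ q : F.Walk r x, q.length ≤ ell G W x ∧
        ∀ z ∈ q.support, z ∈ W → z = r ∨ z = x := by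
    intro n
    induction n with
    | zero =>
      intro x hle hdom
      by_cases hxW : x ∈ W
      · refine ⟨x, hxW, SimpleGraph.Walk.nil, Nat.zero_le _, ?_⟩
        intro z hz _
        rw [SimpleGraph.Walk.support_nil, List.mem_singleton] at hz
        exact Or.inl hz
      · exact absurd hle (by have := ell_pos G W h hdom hxW; omega)
    | succ n ih =>
      intro x hle hdom
      by_cases hxW : x ∈ W
      · refine ⟨x, hxW, SimpleGraph.Walk.nil, Nat.zero_le _, ?_⟩
        intro z hz _
        rw [SimpleGraph.Walk.support_nil, List.mem_singleton] at hz
        exact Or.inl hz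
      · have hlt := hpa3 x hdom hxW
        obtain ⟨w, hwx, hwy⟩ := hpa2 x hdom hxW
        obtain ⟨r, hrW, q, hqlen, hqsupp⟩ := ih (pa x) (by omega) ⟨w, hwy⟩
        have hFadj : F.Adj (pa x) x := by
          have hpar : Fpar.Adj x (pa x) := by
            rw [hFpardef, SimpleGraph.fromEdgeSet_adj]
            exact ⟨⟨x, hdom, hxW, rfl⟩, (hpa1 x hdom hxW).ne⟩
          exact (hFparF hpar).symm
        refine ⟨r, hrW, q.concat hFadj, ?_, ?_⟩
        · rw [SimpleGraph.Walk.length_concat]; omega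
        · intro z hz hzW
          rw [SimpleGraph.Walk.support_concat] at hz
          rcases List.mem_append.mp hz with hz | hz
          · rcases hqsupp z hz hzW with h1 | h1
            · exact Or.inl h1
            · have h0 : ell G W (pa x) = 0 := ell_eq_zero_of_mem G W (h1 ▸ hzW)
              have hq0 : q.length = 0 := by omega
              exact Or.inl (h1.trans (SimpleGraph.Walk.eq_of_length_eq_zero hq0).symm)
          · exact Or.inr (List.mem_singleton.mp hz)
  -- if a chain ends in W, it is trivial
  have hr0 : ∀ {r x : V}, ∀ (q : F.Walk r x), q.length ≤ ell G W x → x ∈ W → r = x := by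
    intro r x q hql hxW
    have h0 := ell_eq_zero_of_mem G W hxW
    have hq0 : q.length = 0 := by omega
    exact SimpleGraph.Walk.eq_of_length_eq_zero hq0
  -- roots across an F-edge are 2h-connected
  have ELF : ∀ {x y r1 r2 : V}, F.Adj x y → r1 ∈ W → r2 ∈ W →
      ∀ (q1 : F.Walk r1 x) (q2 : F.Walk r2 y),
      q1.length ≤ ell G W x → q2.length ≤ ell G W y →
      (∀ z ∈ q1.support, z ∈ W → z = r1 ∨ z = x) →
      (∀ z ∈ q2.support, z ∈ W → z = r2 ∨ z = y) →
      Reach' F W (2 * h) r1 r2 := by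
    intro x y r1 r2 hadj hr1 hr2 q1 q2 hl1 hl2 hs1 hs2
    obtain ⟨w, w', hwx, hwy, _⟩ := (hFGc hadj).2
    have hex : ell G W x ≤ h / 2 := ell_le_of_wit G W h hwx
    have hey : ell G W y ≤ h / 2 := ell_le_of_wit G W h hwy
    refine ⟨hr1, hr2, reach_of_walk W F (2*h) hr1 hr2
      (q1.append (SimpleGraph.Walk.cons hadj q2.reverse)) ?_ ?_⟩
    · rw [SimpleGraph.Walk.length_append, SimpleGraph.Walk.length_cons,
        SimpleGraph.Walk.length_reverse]
      omega
    · intro z hz hzW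
      rw [SimpleGraph.Walk.mem_support_append_iff] at hz
      rcases hz with hz | hz
      · rcases hs1 z hz hzW with h1 | h1
        · exact Or.inl h1
        · subst h1
          exact Or.inl (hr0 q1 hl1 hzW).symm
      · rw [SimpleGraph.Walk.support_cons] at hz
        rcases List.mem_cons.mp hz with rfl | hz
        · exact Or.inl (hr0 q1 hl1 hzW).symm
        · rw [SimpleGraph.Walk.support_reverse, List.mem_reverse] at hz
          rcases hs2 z hz hzW with h1 | h1
          · exact Or.inr h1
          · subst h1
            exact Or.inr (hr0 q2 hl2 hzW).symm
  -- two roots of the same vertex are 2h-connected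
  have JOIN : ∀ {x r1 r2 : V}, r1 ∈ W → r2 ∈ W → (∃ w, Wit G W h w x) →
      ∀ (q1 : F.Walk r1 x) (q2 : F.Walk r2 x),
      q1.length ≤ ell G W x → q2.length ≤ ell G W x →
      (∀ z ∈ q1.support, z ∈ W → z = r1 ∨ z = x) →
      (∀ z ∈ q2.support, z ∈ W → z = r2 ∨ z = x) →
      Reach' F W (2 * h) r1 r2 := by
    intro x r1 r2 hr1 hr2 hdom q1 q2 hl1 hl2 hs1 hs2
    obtain ⟨w, hw⟩ := hdom
    have hex : ell G W x ≤ h / 2 := ell_le_of_wit G W h hw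
    refine ⟨hr1, hr2, reach_of_walk W F (2*h) hr1 hr2 (q1.append q2.reverse) ?_ ?_⟩
    · rw [SimpleGraph.Walk.length_append, SimpleGraph.Walk.length_reverse]
      omega
    · intro z hz hzW
      rw [SimpleGraph.Walk.mem_support_append_iff] at hz
      rcases hz with hz | hz
      · rcases hs1 z hz hzW with h1 | h1
        · exact Or.inl h1
        · subst h1
          exact Or.inl (hr0 q1 hl1 hzW).symm
      · rw [SimpleGraph.Walk.support_reverse, List.mem_reverse] at hz
        rcases hs2 z hz hzW with h1 | h1
        · exact Or.inr h1
        · subst h1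
          exact Or.inr (hr0 q2 hl2 hzW).symm
  -- roots of F-connected vertices are 2h-connected
  have CE : ∀ {x y : V} (p : F.Walk x y), ∀ {r1 r2 : V}, r1 ∈ W → r2 ∈ W →
      (∃ w, Wit G W h w x) →
      ∀ (q1 : F.Walk r1 x) (q2 : F.Walk r2 y),
      q1.length ≤ ell G W x → q2.length ≤ ell G W y →
      (∀ z ∈ q1.support, z ∈ W → z = r1 ∨ z = x) →
      (∀ z ∈ q2.support, z ∈ W → z = r2 ∨ z = y) →
      Reach' F W (2 * h) r1 r2 := by
    intro x y p
    induction p with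
    | nil =>
      intro r1 r2 h1 h2 hdom q1 q2 hl1 hl2 hs1 hs2
      exact JOIN h1 h2 hdom q1 q2 hl1 hl2 hs1 hs2
    | @cons a c b hadj p ih =>
      intro r1 r2 h1 h2 hdom q1 q2 hl1 hl2 hs1 hs2
      obtain ⟨w, w', hwx, hwy, _⟩ := (hFGc hadj).2
      obtain ⟨rm, hrmW, qm, hqml, hqms⟩ := RC (ell G W c) c le_rfl ⟨w', hwy⟩
      exact reach'_trans F W (2*h)
        (ELF hadj h1 hrmW q1 qm hl1 hqml hs1 hqms)
        (ih hrmW h2 ⟨w', hwy⟩ qm q2 hqml hl2 hqms hs2)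
  -- roots across a candidate edge are 2h-connected
  have MX : ∀ {x y r1 r2 : V}, (Gcand G W h).Adj x y → r1 ∈ W → r2 ∈ W →
      ∀ (q1 : F.Walk r1 x) (q2 : F.Walk r2 y),
      q1.length ≤ ell G W x → q2.length ≤ ell G W y →
      (∀ z ∈ q1.support, z ∈ W → z = r1 ∨ z = x) →
      (∀ z ∈ q2.support, z ∈ W → z = r2 ∨ z = y) →
      Reach' F W (2 * h) r1 r2 := by
    intro x y r1 r2 hadj hr1 hr2 q1 q2 hl1 hl2 hs1 hs2
    by_cases hFadj : F.Adj x y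
    · exact ELF hFadj hr1 hr2 q1 q2 hl1 hl2 hs1 hs2
    · obtain ⟨p⟩ := hforce x y hadj hFadj
      obtain ⟨w, w', hwx, hwy, _⟩ := hadj.2
      exact CE p hr1 hr2 ⟨w, hwx⟩ q1 q2 hl1 hl2 hs1 hs2
  -- walking along a witness path
  have CM : ∀ (a : V), a ∈ W → ∀ (x y : V) (P : G.Walk x y), y ∈ W → Reach' G W h a y →
      (∀ z ∈ P.support, Wit G W h a z ∨ Wit G W h y z) →
      ∀ (r : V), r ∈ W → ∀ (q : F.Walk r x), q.length ≤ ell G W x →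
      (∀ z ∈ q.support, z ∈ W → z = r ∨ z = x) → Reach' F W (2 * h) r y := by
    intro a ha x y P
    induction P with
    | nil =>
      intro hb hab hw r hr q hql hqs
      have hrx : r = _ := hr0 q hql hb
      rw [hrx]
      exact reach'_refl F W (2*h) hb
    | @cons x c y' hadj P ih =>
      intro hb hab hw r hr q hql hqs
      have hcdom : Wit G W h a c ∨ Wit G W h y' c := by
        refine hw c ?_
        rw [SimpleGraph.Walk.support_cons]
        exact List.mem_cons_of_mem _ P.start_mem_support
      have hxdom : Wit G W h a x ∨ Wit G W h y' x :=
        hw x (SimpleGraph.Walk.start_mem_support _)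
      have hGc : (Gcand G W h).Adj x c := by
        refine ⟨hadj, ?_⟩
        rcases hxdom with h1 | h1 <;> rcases hcdom with h2 | h2
        · exact ⟨a, a, h1, h2, reach'_refl G W h ha⟩
        · exact ⟨a, y', h1, h2, hab⟩
        · exact ⟨y', a, h1, h2, reach'_symm G W h hab⟩
        · exact ⟨y', y', h1, h2, reach'_refl G W h hb⟩
      have hcd : ∃ w, Wit G W h w c := by
        rcases hcdom with h2 | h2
        · exact ⟨a, h2⟩
        · exact ⟨y', h2⟩
      obtain ⟨rm, hrmW, qm, hqml, hqms⟩ := RC (ell G W c) c le_rfl hcd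
      refine reach'_trans F W (2*h)
        (MX hGc hr hrmW q qm hql hqml hqs hqms) ?_
      refine ih hb hab (fun z hz => hw z ?_) rm hrmW qm hqml hqms
      rw [SimpleGraph.Walk.support_cons]
      exact List.mem_cons_of_mem _ hz
  -- the forward edge translation
  have edgeG : ∀ {s t : V}, s ∈ W → t ∈ W →
      (∃ p : G.Walk s t, p.IsPath ∧ p.length ≤ h ∧
        ∀ z ∈ p.support, z ∈ W → z = s ∨ z = t) →
      Reach' G W h s t → Reach' F W (2 * h) s t := by
    intro s t hs ht hex hst
    obtain ⟨P, hP, hPl, hPs⟩ := hex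
    refine CM s hs s t P ht hst ?_ s hs SimpleGraph.Walk.nil (Nat.zero_le _) ?_
    · intro z hz
      exact wit_of_mem_path G W h P hP hPl hPs hz hs ht
    · intro z hz _
      rw [SimpleGraph.Walk.support_nil, List.mem_singleton] at hz
      exact Or.inl hz
  -- the backward direction : F-walks only connect equivalent vertices
  have CL : ∀ {x y : V} (p : F.Walk x y), (∃ w, Wit G W h w x) → ClReach G W h x y := by
    intro x y p
    induction p with
    | nil =>
      intro hdom
      obtain ⟨w, hw⟩ := hdom
      exact ⟨w, w, hw, hw, reach'_refl G W h hw.1⟩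
    | @cons a c b hadj p ih =>
      intro hdom
      obtain ⟨w, w', hwx, hwc, hr⟩ := (hFGc hadj).2
      exact clreach_trans G W h ⟨w, w', hwx, hwc, hr⟩ (ih ⟨w', hwc⟩)
  have edgeF : ∀ {s t : V}, s ∈ W → t ∈ W → (∀ (p : F.Walk s t), True) →
      (∃ p : F.Walk s t, p.IsPath ∧ p.length ≤ 2 * h ∧
        ∀ z ∈ p.support, z ∈ W → z = s ∨ z = t) →
      Reach' G W h s t := by
    intro s t hs ht _ hex
    obtain ⟨P, _, _, _⟩ := hex
    obtain ⟨w, w', hws, hwt, hr⟩ := CL P ⟨s, wit_self G W h hs⟩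
    exact reach'_trans G W h (reach'_symm G W h (reach'_of_wit G W h hws hs))
      (reach'_trans G W h hr (reach'_of_wit G W h hwt ht))
  -- final assembly
  refine ⟨F, le_trans hFGc (fun a b hab => hab.1), hFAc, ?_⟩
  intro u v hu hv
  constructor
  · intro hr
    have main : ∀ (A B : ↥W), (connGraph G W h).Reachable A B →
        Reach' F W (2 * h) (↑A) (↑B) := by
      intro A B hAB
      obtain ⟨p⟩ := hAB
      induction p with
      | @nil A0 => exact reach'_refl F W (2*h) A0.2
      | @cons A0 C B0 hadj p ih =>
        refine reach'_trans F W (2*h) ?_ ih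
        have hadj' := (SimpleGraph.fromRel_adj _ A0 C).mp hadj
        have hAC : Reach' G W h (↑A0) (↑C) := ⟨A0.2, C.2, hadj.reachable⟩
        rcases hadj'.2 with hrel | hrel
        · exact edgeG A0.2 C.2 hrel hAC
        · exact reach'_symm F W (2*h) (edgeG C.2 A0.2 hrel (reach'_symm G W h hAC))
    obtain ⟨h1, h2, r⟩ := main ⟨u, hu⟩ ⟨v, hv⟩ hr
    exact r
  · intro hr
    have main : ∀ (A B : ↥W), (connGraph F W (2 * h)).Reachable A B →
        Reach' G W h (↑A) (↑B) := by
      intro A B hAB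
      obtain ⟨p⟩ := hAB
      induction p with
      | @nil A0 => exact reach'_refl G W h A0.2
      | @cons A0 C B0 hadj p ih =>
        refine reach'_trans G W h ?_ ih
        have hadj' := (SimpleGraph.fromRel_adj _ A0 C).mp hadj
        rcases hadj'.2 with hrel | hrel
        · exact edgeF A0.2 C.2 (fun _ => trivial) hrel
        · exact reach'_symm G W h (edgeF C.2 A0.2 (fun _ => trivial) hrel)
    obtain ⟨h1, h2, r⟩ := main ⟨u, hu⟩ ⟨v, hv⟩ hr
    exact r
end

section
/- Let H ⊆ G be a subgraph, (T,·) a (βh)-hop partial tree embedding of G with worst-case distance stretch α, and suppose H has an h-hop connector on vertex set V(T) with hop stretch β and congestion C. Then w_T(T(H,h)) ≤ C·α·w_G(H). -/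
/-- The weight of a walk: the sum of the weights of its edges (with multiplicity). -/
noncomputable def walkW {V : Type*} (w : Sym2 V → ℝ) {G : SimpleGraph V} {u v : V}
    (p : G.Walk u v) : ℝ :=
  (p.edges.map w).sum

/-- The `h`-hop-constrained distance in the complete weighted graph with edge weights
`w`: the minimum weight of a walk with at most `h` edges. -/
noncomputable def hopDistG {V : Type*} (w : Sym2 V → ℝ) (h : ℕ) (u v : V) : ℝ :=
  sInf {c | ∃ p : (⊤ : SimpleGraph V).Walk u v, p.length ≤ h ∧ walkW w p = c}

/-- The total weight of a set of edges. -/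
noncomputable def setWeight {V : Type*} [Fintype V] (w : Sym2 V → ℝ)
    (S : Set (Sym2 V)) : ℝ :=
  ∑ e ∈ (Set.toFinite S).toFinset, w e

/-- The shortest-path distance induced by edge weights `wT` on the graph `T`. -/
noncomputable def treeDist {V : Type*} (T : SimpleGraph V) (wT : Sym2 V → ℝ)
    (u v : V) : ℝ :=
  sInf {c | ∃ p : T.Walk u v, walkW wT p = c}

/-- Projection of a walk in the tree `T` to a walk in the (complete) graph, obtained by
concatenating the projections of the tree edges. -/
def projWalkF {V : Type*} {T : SimpleGraph V}
    (proj : ∀ ⦃u v : V⦄, T.Adj u v → (⊤ : SimpleGraph V).Walk u v) :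
    ∀ {u v : V}, T.Walk u v → (⊤ : SimpleGraph V).Walk u v
  | _, _, SimpleGraph.Walk.nil => SimpleGraph.Walk.nil
  | _, _, SimpleGraph.Walk.cons ha q => (proj ha).append (projWalkF proj q)

open SimpleGraph

section AuxList
variable {γ ι : Type*}

lemma aux_sublist_sum_le : ∀ {a b : List ℝ}, a.Sublist b → (∀ x ∈ b, 0 ≤ x) → a.sum ≤ b.sum := by
  intro a b hs
  induction hs with
  | slnil => intro _; simp
  | cons x hs ih =>
      intro hb
      simp only [List.sum_cons]
      have := ih (fun y hy => hb y (List.mem_cons_of_mem _ hy))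
      have hx := hb x List.mem_cons_self
      linarith
  | cons_cons x hs ih =>
      intro hb
      simp only [List.sum_cons]
      have := ih (fun y hy => hb y (List.mem_cons_of_mem _ hy))
      linarith

lemma aux_sum_le_of_nodup_subset (f : γ → ℝ) (hf : ∀ x, 0 ≤ f x)
    (l1 l2 : List γ) (hnd : l1.Nodup) (hsub : l1 ⊆ l2) :
    (l1.map f).sum ≤ (l2.map f).sum := by
  obtain ⟨l, hperm, hsl⟩ := List.subperm_of_subset hnd hsub
  calc (l1.map f).sum = (l.map f).sum := ((hperm.map f).sum_eq).symm
    _ ≤ (l2.map f).sum := aux_sublist_sum_le (hsl.map f) (by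
        intro x hx; obtain ⟨y, _, rfl⟩ := List.mem_map.mp hx; exact hf y)

lemma aux_map_sum_nonneg (f : γ → ℝ) (hf : ∀ x, 0 ≤ f x) (l : List γ) :
    0 ≤ (l.map f).sum :=
  List.sum_nonneg (by intro x hx; obtain ⟨y, _, rfl⟩ := List.mem_map.mp hx; exact hf y)

lemma aux_cover_sum_le [DecidableEq γ] (f : γ → ℝ) (hf : ∀ x, 0 ≤ f x)
    (g : ι → List γ) :
    ∀ (L : List ι) (s : Finset γ), (∀ x ∈ s, ∃ i ∈ L, x ∈ g i) →
    ∑ x ∈ s, f x ≤ (L.map (fun i => ((g i).map f).sum)).sum := by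
  intro L
  induction L with
  | nil =>
      intro s hcov
      have : ∑ x ∈ s, f x = 0 :=
        Finset.sum_eq_zero (fun x hx => absurd (hcov x hx) (by simp))
      simp [this]
  | cons i L' ih =>
      intro s hcov
      classical
      rw [← Finset.sum_filter_add_sum_filter_not s (fun x => x ∈ g i)]
      have h1 : ∑ x ∈ s.filter (fun x => x ∈ g i), f x ≤ ((g i).map f).sum := by
        have hnd : (s.filter (fun x => x ∈ g i)).toList.Nodup := Finset.nodup_toList _
        have hsub : (s.filter (fun x => x ∈ g i)).toList ⊆ g i := by
          intro x hx
          have := Finset.mem_toList.mp hx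
          exact (Finset.mem_filter.mp this).2
        have := aux_sum_le_of_nodup_subset f hf _ _ hnd hsub
        rwa [Finset.sum_map_toList] at this
      have h2 : ∑ x ∈ s.filter (fun x => ¬ x ∈ g i), f x ≤
          (L'.map (fun i => ((g i).map f).sum)).sum := by
        apply ih
        intro x hx
        obtain ⟨hxs, hxn⟩ := Finset.mem_filter.mp hx
        obtain ⟨i', hi', hxi'⟩ := hcov x hxs
        rcases List.mem_cons.mp hi' with rfl | h
        · exact absurd hxi' hxn
        · exact ⟨i', h, hxi'⟩
      simp only [List.map_cons, List.sum_cons]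
      linarith

lemma aux_nodup_sum_eq [DecidableEq γ] (f : γ → ℝ) (l : List γ) (s : Finset γ)
    (hnd : l.Nodup) (hsub : ∀ x ∈ l, x ∈ s) :
    (l.map f).sum = ∑ x ∈ s, if x ∈ l then f x else 0 := by
  rw [← Finset.sum_filter]
  have hfs : s.filter (fun x => x ∈ l) = l.toFinset := by
    ext x
    simp only [Finset.mem_filter, List.mem_toFinset]
    exact ⟨fun h => h.2, fun h => ⟨hsub x h, h⟩⟩
  rw [hfs, List.sum_toFinset _ hnd]

lemma aux_swap (s : Finset γ) (F : ι → γ → ℝ) :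
    ∀ (L : List ι),
    (L.map (fun i => ∑ x ∈ s, F i x)).sum = ∑ x ∈ s, (L.map (fun i => F i x)).sum := by
  intro L
  induction L with
  | nil => simp
  | cons i L' ih =>
      simp only [List.map_cons, List.sum_cons, ih, Finset.sum_add_distrib]

lemma aux_count (pr : ι → Prop) [DecidablePred pr] (c : ℝ) :
    ∀ (L : List ι),
    (L.map (fun i => if pr i then c else 0)).sum = (L.countP (fun i => decide (pr i))) * c := by
  intro L
  induction L with
  | nil => simp
  | cons i L' ih =>
      simp only [List.map_cons, List.sum_cons, ih, List.countP_cons]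
      by_cases h : pr i <;> simp [h] <;> ring

end AuxList

section TP
variable {V : Type*} [DecidableEq V] {T : SimpleGraph V}
open scoped Classical

/-- Edge list of a chosen path between `u` and `v` in `T` (empty if unreachable). -/
noncomputable def tpEdges (T : SimpleGraph V) (u v : V) : List (Sym2 V) :=
  if h : T.Reachable u v then (h.some.toPath : T.Walk u v).edges else []

lemma tpEdges_eq_path (hacyc : T.IsAcyclic) {u v : V} (p : T.Walk u v) (hp : p.IsPath) :
    tpEdges T u v = p.edges := by
  have hr : T.Reachable u v := ⟨p⟩
  rw [tpEdges, dif_pos hr]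
  have := hacyc.path_unique hr.some.toPath ⟨p, hp⟩
  rw [this]

lemma tpEdges_nodup (u v : V) : (tpEdges T u v).Nodup := by
  rw [tpEdges]
  split
  · exact (Walk.toPath _).2.edges_nodup
  · exact List.nodup_nil

lemma tpEdges_subset_walk (hacyc : T.IsAcyclic) {u v : V} (q : T.Walk u v) :
    tpEdges T u v ⊆ q.edges := by
  rw [tpEdges_eq_path hacyc (q.toPath : T.Walk u v) q.toPath.2]
  exact q.edges_toPath_subset

lemma tpEdges_symm (hacyc : T.IsAcyclic) (u v : V) {e : Sym2 V}
    (he : e ∈ tpEdges T u v) : e ∈ tpEdges T v u := by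
  by_cases hr : T.Reachable u v
  · obtain ⟨p⟩ := hr
    rw [tpEdges_eq_path hacyc p.toPath.1 p.toPath.2] at he
    rw [tpEdges_eq_path hacyc (p.toPath.1.reverse) (p.toPath.2.reverse)]
    rw [Walk.edges_reverse, List.mem_reverse]
    exact he
  · rw [tpEdges, dif_neg hr] at he
    exact absurd he List.not_mem_nil

lemma tpEdges_split (hacyc : T.IsAcyclic) (u x v : V)
    (h1 : T.Reachable u x) (h2 : T.Reachable x v) : ∀ e ∈ tpEdges T u v,
    e ∈ tpEdges T u x ∨ e ∈ tpEdges T x v := by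
  intro e he
  obtain ⟨p1⟩ := h1
  obtain ⟨p2⟩ := h2
  have hsub := tpEdges_subset_walk hacyc ((p1.toPath.1).append (p2.toPath.1))
  have := hsub he
  rw [Walk.edges_append, List.mem_append] at this
  rcases this with h | h
  · left; rwa [tpEdges_eq_path hacyc p1.toPath.1 p1.toPath.2]
  · right; rwa [tpEdges_eq_path hacyc p2.toPath.1 p2.toPath.2]

lemma tpEdges_self (hacyc : T.IsAcyclic) (u : V) : tpEdges T u u = [] := by
  rw [tpEdges_eq_path hacyc Walk.nil Walk.IsPath.nil, Walk.edges_nil]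

end TP

lemma conn_reach {V : Type*} [DecidableEq V] (H : SimpleGraph V) (W : Set V) (h : ℕ) :
    ∀ (n : ℕ) (u v : V) (hu : u ∈ W) (hv : v ∈ W) (p : H.Walk u v),
    p.IsPath → p.length ≤ h → p.length ≤ n →
    (connGraph H W h).Reachable ⟨u, hu⟩ ⟨v, hv⟩ := by
  intro n
  induction n with
  | zero =>
      intro u v hu hv p hp hh hn
      have huv : u = v := SimpleGraph.Walk.eq_of_length_eq_zero (Nat.le_zero.mp hn)
      subst huv
      exact Reachable.refl _
  | succ n ih =>
      intro u v hu hv p hp hh hn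
      by_cases hex : ∃ x ∈ p.support, x ∈ W ∧ x ≠ u ∧ x ≠ v
      · obtain ⟨x, hxs, hxW, hxu, hxv⟩ := hex
        have hlen : (p.takeUntil x hxs).length + (p.dropUntil x hxs).length = p.length := by
          have := congrArg SimpleGraph.Walk.length (p.take_spec hxs)
          rwa [SimpleGraph.Walk.length_append] at this
        have h1pos : 1 ≤ (p.takeUntil x hxs).length := by
          rcases Nat.eq_zero_or_pos (p.takeUntil x hxs).length with h0 | h1
          · exact absurd (SimpleGraph.Walk.eq_of_length_eq_zero h0).symm hxu
          · exact h1
        have h2pos : 1 ≤ (p.dropUntil x hxs).length := by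
          rcases Nat.eq_zero_or_pos (p.dropUntil x hxs).length with h0 | h1
          · exact absurd (SimpleGraph.Walk.eq_of_length_eq_zero h0) hxv
          · exact h1
        have r1 := ih u x hu hxW (p.takeUntil x hxs) (hp.takeUntil hxs)
          (le_trans (by omega) hh) (by omega)
        have r2 := ih x v hxW hv (p.dropUntil x hxs) (hp.dropUntil hxs)
          (le_trans (by omega) hh) (by omega)
        exact r1.trans r2
      · by_cases huv : u = v
        · subst huv; exact Reachable.refl _
        · apply SimpleGraph.Adj.reachable
          rw [connGraph, SimpleGraph.fromRel_adj]
          refine ⟨fun hc => huv (congrArg Subtype.val hc), Or.inl ⟨p, hp, hh, ?_⟩⟩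
          intro x hxs hxW
          by_contra hcon
          push_neg at hcon
          exact hex ⟨x, hxs, hxW, hcon.1, hcon.2⟩

lemma gp_cover {V : Type*} [DecidableEq V] {T : SimpleGraph V} (hacyc : T.IsAcyclic)
    {W : Set V} (hconn : ∀ u v : V, u ∈ W → v ∈ W → T.Reachable u v)
    (R : W → W → Prop) :
    ∀ (a b : W), (SimpleGraph.fromRel R).Walk a b → ∀ (e : Sym2 V),
    e ∈ tpEdges T (a : V) (b : V) →
    ∃ x y : W, (R x y ∨ R y x) ∧ e ∈ tpEdges T (x : V) (y : V) := by
  intro a b wk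
  induction wk with
  | nil =>
      intro e he
      rw [tpEdges_self hacyc] at he
      exact absurd he List.not_mem_nil
  | @cons a c b hadj wk' ih =>
      intro e he
      rcases tpEdges_split hacyc (a : V) (c : V) (b : V)
          (hconn _ _ a.2 c.2) (hconn _ _ c.2 b.2) e he with h | h
      · rw [SimpleGraph.fromRel_adj] at hadj
        exact ⟨a, c, hadj.2, h⟩
      · exact ih e h

/-- If `(T, proj)` is a `(βh)`-hop partial tree embedding of the complete weighted graph
`(V, w)` with worst-case distance stretch `α`, and the subgraph `H` has an `h`-hop
connector `P` on the embedded vertex set `VT` with hop stretch `β` and congestion `C`,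
then `w_T(T(H,h)) ≤ C·α·w(H)`. -/
theorem connector_projection_bound {V : Type*} [Fintype V] [DecidableEq V]
    (w : Sym2 V → ℝ) (hw : ∀ e, 0 ≤ w e)
    (H : SimpleGraph V)
    (T : SimpleGraph V) (VT : Set V) (wT : Sym2 V → ℝ) (hwT : ∀ e, 0 ≤ wT e)
    (hsupp : ∀ ⦃u v : V⦄, T.Adj u v → u ∈ VT ∧ v ∈ VT)
    (hacyc : T.IsAcyclic)
    (hconn : ∀ u v : V, u ∈ VT → v ∈ VT → T.Reachable u v)
    (proj : ∀ ⦃u v : V⦄, T.Adj u v → (⊤ : SimpleGraph V).Walk u v)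
    (hdom : ∀ ⦃u v : V⦄ (a : T.Adj u v), walkW w (proj a) ≤ wT s(u, v))
    (h β β' : ℕ) (hh : 1 ≤ h) (hβ : 1 ≤ β) (hβ' : 1 ≤ β')
    (α : ℝ) (hα : 1 ≤ α)
    (hlower : ∀ u v : V, u ∈ VT → v ∈ VT →
      hopDistG w (β' * (β * h)) u v ≤ treeDist T wT u v)
    (hupper : ∀ u v : V, u ∈ VT → v ∈ VT →
      treeDist T wT u v ≤ α * hopDistG w (β * h) u v)
    (hhop : ∀ u v : V, u ∈ VT → v ∈ VT → ∀ p : T.Walk u v, p.IsPath →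
      (projWalkF proj p).length ≤ β' * (β * h))
    (C : ℕ)
    (P : List (Σ u : V, Σ v : V, H.Walk u v))
    (hPW : ∀ q ∈ P, q.1 ∈ VT ∧ q.2.1 ∈ VT)
    (hPconn : ∀ (u v : V) (hu : u ∈ VT) (hv : v ∈ VT),
      (connGraph H VT h).Reachable ⟨u, hu⟩ ⟨v, hv⟩ →
      (SimpleGraph.fromRel (fun (a b : VT) =>
          ∃ q ∈ P, q.1 = (a : V) ∧ q.2.1 = (b : V))).Reachable ⟨u, hu⟩ ⟨v, hv⟩)
    (hPcong : ∀ e : Sym2 V, (P.countP fun q => decide (e ∈ q.2.2.edges)) ≤ C)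
    (hPhop : ∀ q ∈ P, q.2.2.length ≤ β * h) :
    setWeight wT {e : Sym2 V |
        ∃ u v : V, u ∈ VT ∧ v ∈ VT ∧ (∃ q : H.Walk u v, q.length ≤ h) ∧
          ∃ p : T.Walk u v, p.IsPath ∧ e ∈ p.edges} ≤
      C * α * setWeight w H.edgeSet := by
  classical
  set S : Set (Sym2 V) := {e : Sym2 V |
      ∃ u v : V, u ∈ VT ∧ v ∈ VT ∧ (∃ q : H.Walk u v, q.length ≤ h) ∧
        ∃ p : T.Walk u v, p.IsPath ∧ e ∈ p.edges} with hS
  -- Coverage: every edge of `S` lies on the tree path between endpoints of some walk in `P`.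
  have hcover : ∀ e ∈ (Set.toFinite S).toFinset, ∃ q ∈ P, e ∈ tpEdges T q.1 q.2.1 := by
    intro e heS
    rw [Set.Finite.mem_toFinset] at heS
    obtain ⟨u, v, hu, hv, ⟨qH, hqlen⟩, p, hp, hep⟩ := heS
    have he' : e ∈ tpEdges T u v := by
      rw [tpEdges_eq_path hacyc p hp]; exact hep
    have hreach1 : (connGraph H VT h).Reachable ⟨u, hu⟩ ⟨v, hv⟩ := by
      apply conn_reach H VT h (qH.toPath.1.length) u v hu hv qH.toPath.1 qH.toPath.2
      · exact le_trans (SimpleGraph.Walk.length_bypass_le qH) hqlen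
      · exact le_refl _
    have hreach2 := hPconn u v hu hv hreach1
    obtain ⟨wk⟩ := hreach2
    obtain ⟨x, y, hrel, hexy⟩ := gp_cover hacyc hconn
      (fun (a b : VT) => ∃ q ∈ P, q.1 = (a : V) ∧ q.2.1 = (b : V)) ⟨u, hu⟩ ⟨v, hv⟩ wk e he'
    rcases hrel with ⟨q, hqP, hq1, hq2⟩ | ⟨q, hqP, hq1, hq2⟩
    · refine ⟨q, hqP, ?_⟩
      obtain ⟨qa, qb, qw⟩ := q
      simp only at hq1 hq2 ⊢
      subst hq1; subst hq2
      exact hexy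
    · refine ⟨q, hqP, ?_⟩
      obtain ⟨qa, qb, qw⟩ := q
      simp only at hq1 hq2 ⊢
      subst hq1; subst hq2
      exact tpEdges_symm hacyc _ _ hexy
  -- Step 1: sum over distinct tree edges is at most the total weight of the tree paths.
  have step1 : setWeight wT S ≤
      (P.map (fun q => ((tpEdges T q.1 q.2.1).map wT).sum)).sum := by
    exact aux_cover_sum_le wT hwT (fun q => tpEdges T q.1 q.2.1) P _ hcover
  -- Step 2: per-walk bound via the embedding stretch.
  have step2 : ∀ q ∈ P, ((tpEdges T q.1 q.2.1).map wT).sum ≤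
      α * ((q.2.2.toPath.1.edges).map w).sum := by
    intro q hq
    obtain ⟨hu, hv⟩ := hPW q hq
    have stepa : ((tpEdges T q.1 q.2.1).map wT).sum ≤ treeDist T wT q.1 q.2.1 := by
      apply le_csInf
      · exact ⟨walkW wT (hconn _ _ hu hv).some, (hconn _ _ hu hv).some, rfl⟩
      · rintro c ⟨p', rfl⟩
        exact aux_sum_le_of_nodup_subset wT hwT _ _ (tpEdges_nodup _ _)
          (tpEdges_subset_walk hacyc p')
    have stepb := hupper q.1 q.2.1 hu hv
    have stepc : hopDistG w (β * h) q.1 q.2.1 ≤ ((q.2.2.toPath.1.edges).map w).sum := by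
      apply csInf_le
      · exact ⟨0, by rintro c ⟨p', _, rfl⟩; exact aux_map_sum_nonneg w hw _⟩
      · have hsubE : ∀ e ∈ q.2.2.toPath.1.edges, e ∈ (⊤ : SimpleGraph V).edgeSet := by
          intro e hee
          exact SimpleGraph.edgeSet_mono le_top
            (q.2.2.edges_subset_edgeSet (q.2.2.edges_toPath_subset hee))
        refine ⟨q.2.2.toPath.1.transfer ⊤ hsubE, ?_, ?_⟩
        · rw [SimpleGraph.Walk.length_transfer]
          exact le_trans (SimpleGraph.Walk.length_bypass_le q.2.2) (hPhop q hq)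
        · rw [walkW, SimpleGraph.Walk.edges_transfer]
    calc ((tpEdges T q.1 q.2.1).map wT).sum ≤ treeDist T wT q.1 q.2.1 := stepa
      _ ≤ α * hopDistG w (β * h) q.1 q.2.1 := stepb
      _ ≤ α * ((q.2.2.toPath.1.edges).map w).sum :=
          mul_le_mul_of_nonneg_left stepc (le_trans zero_le_one hα)
  -- Step 3: congestion bound.
  have step3 : (P.map (fun q => ((q.2.2.toPath.1.edges).map w).sum)).sum ≤
      C * setWeight w H.edgeSet := by
    set HF : Finset (Sym2 V) := (Set.toFinite H.edgeSet).toFinset with hHF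
    have hrw : ∀ q : (Σ u : V, Σ v : V, H.Walk u v),
        ((q.2.2.toPath.1.edges).map w).sum =
        ∑ e ∈ HF, if e ∈ q.2.2.toPath.1.edges then w e else 0 := by
      intro q
      apply aux_nodup_sum_eq w _ _ (q.2.2.toPath.2.edges_nodup)
      intro x hx
      rw [hHF, Set.Finite.mem_toFinset]
      exact q.2.2.edges_subset_edgeSet (q.2.2.edges_toPath_subset hx)
    calc (P.map (fun q => ((q.2.2.toPath.1.edges).map w).sum)).sum
        = (P.map (fun q => ∑ e ∈ HF, if e ∈ q.2.2.toPath.1.edges then w e else 0)).sum := by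
          congr 1; exact List.map_congr_left (fun q _ => hrw q)
      _ = ∑ e ∈ HF, (P.map (fun q => if e ∈ q.2.2.toPath.1.edges then w e else 0)).sum :=
          aux_swap HF _ P
      _ ≤ ∑ e ∈ HF, (C : ℝ) * w e := by
          apply Finset.sum_le_sum
          intro e _
          rw [aux_count (fun q => e ∈ q.2.2.toPath.1.edges) (w e) P]
          apply mul_le_mul_of_nonneg_right _ (hw e)
          have hle : (P.countP fun q => decide (e ∈ q.2.2.toPath.1.edges)) ≤
              (P.countP fun q => decide (e ∈ q.2.2.edges)) := by
            apply List.countP_mono_left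
            intro q _ hq
            simp only [decide_eq_true_eq] at hq ⊢
            exact q.2.2.edges_toPath_subset hq
          exact_mod_cast le_trans hle (hPcong e)
      _ = C * setWeight w H.edgeSet := by
          rw [setWeight, ← Finset.mul_sum]
  -- Assemble.
  have step12 : (P.map (fun q => ((tpEdges T q.1 q.2.1).map wT).sum)).sum ≤
      (P.map (fun q => α * ((q.2.2.toPath.1.edges).map w).sum)).sum :=
    List.sum_le_sum step2
  have hmul : (P.map (fun q => α * ((q.2.2.toPath.1.edges).map w).sum)).sum =
      α * (P.map (fun q => ((q.2.2.toPath.1.edges).map w).sum)).sum :=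
    List.sum_map_mul_left P _ α
  calc setWeight wT S
      ≤ (P.map (fun q => ((tpEdges T q.1 q.2.1).map wT).sum)).sum := step1
    _ ≤ (P.map (fun q => α * ((q.2.2.toPath.1.edges).map w).sum)).sum := step12
    _ = α * (P.map (fun q => ((q.2.2.toPath.1.edges).map w).sum)).sum := hmul
    _ ≤ α * (C * setWeight w H.edgeSet) :=
        mul_le_mul_of_nonneg_left step3 (le_trans zero_le_one hα)
    _ = C * α * setWeight w H.edgeSet := by ring
end
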